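/- Let Ω ⊆ ℝ^N be Lebesgue measurable of finite Lebesgue measure and let N be the north pole of the unit sphere S^N ⊂ ℝ^{N+1}. Then for every r < -N: the upper spherical Minkowski content satisfies M̄_S^r(N, Ψ(Ω)) ≤ 2^r M̄^r(∞,Ω), and the lower spherical content satisfies M̲_S^r(N, Ψ(Ω)) ≤ 2^r M̲^r(∞,Ω), where Ψ is the stereographic projection. -/

import Mathlib

open MeasureTheory Filter Set
open scoped ENNReal NNReal Topology

noncomputable section

/-- The `[a,b)`-shell centered at the origin in `ℝ^N`. -/
def shell (N : ℕ) (a b : ℝ) : Set (EuclideanSpace ℝ (Fin N)) :=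
  {x | a ≤ ‖x‖ ∧ ‖x‖ < b}

/-- The complement of the open ball `B_t(0)` in `ℝ^N`. -/
def farBall (N : ℕ) (t : ℝ) : Set (EuclideanSpace ℝ (Fin N)) :=
  {x | t ≤ ‖x‖}

/-- Upper φ-shell Minkowski content of `Ω` at infinity. -/
def upperShellContent (N : ℕ) (Ω : Set (EuclideanSpace ℝ (Fin N))) (φ r : ℝ) : ℝ≥0∞ :=
  Filter.limsup (fun t : ℝ =>
    volume (shell N t (φ * t) ∩ Ω) / ENNReal.ofReal (t ^ ((N : ℝ) + r))) Filter.atTop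

/-- Lower φ-shell Minkowski content of `Ω` at infinity. -/
def lowerShellContent (N : ℕ) (Ω : Set (EuclideanSpace ℝ (Fin N))) (φ r : ℝ) : ℝ≥0∞ :=
  Filter.liminf (fun t : ℝ =>
    volume (shell N t (φ * t) ∩ Ω) / ENNReal.ofReal (t ^ ((N : ℝ) + r))) Filter.atTop

/-- Upper Minkowski content of `Ω` at infinity. -/
def upperContent (N : ℕ) (Ω : Set (EuclideanSpace ℝ (Fin N))) (r : ℝ) : ℝ≥0∞ :=
  Filter.limsup (fun t : ℝ =>
    volume (farBall N t ∩ Ω) / ENNReal.ofReal (t ^ ((N : ℝ) + r))) Filter.atTop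

/-- Lower Minkowski content of `Ω` at infinity. -/
def lowerContent (N : ℕ) (Ω : Set (EuclideanSpace ℝ (Fin N))) (r : ℝ) : ℝ≥0∞ :=
  Filter.liminf (fun t : ℝ =>
    volume (farBall N t ∩ Ω) / ENNReal.ofReal (t ^ ((N : ℝ) + r))) Filter.atTop

/-- Upper φ-shell Minkowski dimension of `Ω` at infinity, as an extended real. -/
def upperShellDim (N : ℕ) (Ω : Set (EuclideanSpace ℝ (Fin N))) (φ : ℝ) : EReal :=
  sInf ((fun r : ℝ => (r : EReal)) '' {r : ℝ | upperShellContent N Ω φ r = 0})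

/-- Lower φ-shell Minkowski dimension of `Ω` at infinity, as an extended real. -/
def lowerShellDim (N : ℕ) (Ω : Set (EuclideanSpace ℝ (Fin N))) (φ : ℝ) : EReal :=
  sInf ((fun r : ℝ => (r : EReal)) '' {r : ℝ | lowerShellContent N Ω φ r = 0})

/-- The spherical volume of the image of a set `E ⊆ ℝ^N` under stereographic projection,
expressed by the change-of-variables formula `|Ψ(E)|_S = ∫_E 2^N/(1+|x|²)^N dx`. -/
def sphericalVolume (N : ℕ) (E : Set (EuclideanSpace ℝ (Fin N))) : ℝ≥0∞ :=
  ∫⁻ x in E, ENNReal.ofReal ((2 : ℝ) ^ (N : ℝ) / (1 + ‖x‖ ^ 2) ^ (N : ℝ))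

/-- Upper spherical Minkowski content of the north pole relative to `Ψ(Ω)`, using the identity
`Ψ⁻¹({N}_{δ,S} ∩ Ψ(Ω)) = B_{cot(δ/2)}(0)ᶜ ∩ Ω`. -/
def upperSphericalContent (N : ℕ) (Ω : Set (EuclideanSpace ℝ (Fin N))) (r : ℝ) : ℝ≥0∞ :=
  Filter.limsup (fun δ : ℝ =>
    sphericalVolume N (farBall N (Real.cot (δ / 2)) ∩ Ω) / ENNReal.ofReal (δ ^ ((N : ℝ) - r)))
    (nhdsWithin 0 (Ioi 0))

/-- Lower spherical Minkowski content of the north pole relative to `Ψ(Ω)`. -/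
def lowerSphericalContent (N : ℕ) (Ω : Set (EuclideanSpace ℝ (Fin N))) (r : ℝ) : ℝ≥0∞ :=
  Filter.liminf (fun δ : ℝ =>
    sphericalVolume N (farBall N (Real.cot (δ / 2)) ∩ Ω) / ENNReal.ofReal (δ ^ ((N : ℝ) - r)))
    (nhdsWithin 0 (Ioi 0))

/-! With `t = cot (δ / 2)` one has `2 / (1 + t²) = 2 sin² (δ / 2)`, so on `{t ≤ |x|}` the
spherical density is at most `(2 sin² (δ / 2)) ^ N`. Using `sin (δ / 2) ≤ δ / 2` for the factor
`sin (δ / 2) ^ (N - r)`, the spherical quotient at `δ` is at most `2 ^ r cos (δ / 2) ^ (N + r)`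
times the Euclidean quotient at `t`. Since `δ ↦ cot (δ / 2)` maps `𝓝[>] 0` exactly onto `atTop` and the
cosine factor tends to `1`, both the `limsup` and the `liminf` inequalities follow. -/

open Real

namespace ENNReal

variable {α : Type*} {f : Filter α} [NeBot f] {u g v : α → ℝ≥0∞} {c : ℝ≥0∞}

lemma limsup_le_mul_limsup_of_le_mul (hg : Tendsto g f (𝓝 c)) (hc₀ : c ≠ 0) (hc : c ≠ ∞)
    (h : u ≤ᶠ[f] g * v) : limsup u f ≤ c * limsup v f := by
  refine (limsup_le_limsup h).trans ?_
  rw [← hg.limsup_eq]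
  exact limsup_mul_le' (by simp [hg.limsup_eq, hc₀]) (by simp [hg.limsup_eq, hc])

lemma liminf_le_mul_liminf_of_le_mul (hg : Tendsto g f (𝓝 c)) (hc₀ : c ≠ 0) (hc : c ≠ ∞)
    (h : u ≤ᶠ[f] g * v) : liminf u f ≤ c * liminf v f := by
  refine (liminf_le_liminf h).trans ?_
  rw [← hg.limsup_eq]
  exact liminf_mul_le (by simp [hg.limsup_eq, hc₀]) (by simp [hg.limsup_eq, hc])

end ENNReal

namespace Real

lemma cot_eq_inv_tan (x : ℝ) : cot x = (tan x)⁻¹ := by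
  rw [cot_eq_cos_div_sin, tan_eq_sin_div_cos, inv_div]

lemma map_cot_half_nhdsGT_zero : map (fun δ : ℝ => cot (δ / 2)) (𝓝[>] 0) = atTop := by
  refine map_eq_of_inverse (fun t => 2 * arctan t⁻¹) (funext fun t => ?_) ?_ ?_
  · rw [Function.comp_apply, mul_div_cancel_left₀ _ two_ne_zero, cot_eq_inv_tan, tan_arctan,
      inv_inv, id]
  · have htan : Tendsto (fun δ : ℝ => tan (δ / 2)) (𝓝[>] 0) (𝓝[>] 0) := by
      refine tendsto_nhdsWithin_iff.2 ⟨?_, ?_⟩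
      · have : ContinuousAt (fun δ : ℝ => tan (δ / 2)) 0 :=
          (continuousAt_tan.2 (by simp)).comp (by fun_prop)
        simpa using this.tendsto.mono_left nhdsWithin_le_nhds
      · filter_upwards [Ioo_mem_nhdsGT pi_pos] with δ hδ
        exact tan_pos_of_pos_of_lt_pi_div_two (by linarith [hδ.1]) (by linarith [hδ.2])
    simp only [cot_eq_inv_tan]
    exact tendsto_inv_nhdsGT_zero.comp htan
  · refine tendsto_nhdsWithin_iff.2 ⟨?_, ?_⟩
    · simpa using ((continuous_arctan.tendsto 0).comp tendsto_inv_atTop_zero).const_mul 2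
    · filter_upwards [eventually_gt_atTop 0] with t ht
      exact mul_pos two_pos (arctan_pos.2 (inv_pos.2 ht))

lemma two_rpow_div_one_add_cot_sq_rpow_div_le {s r u : ℝ} (hrs : r ≤ s) (hu : 0 < u)
    (hu' : u < π / 2) :
    2 ^ s / (1 + cot u ^ 2) ^ s / (2 * u) ^ (s - r) ≤
      2 ^ r * cos u ^ (s + r) / cot u ^ (s + r) := by
  have hsin : 0 < sin u := sin_pos_of_pos_of_lt_pi hu (by linarith [pi_pos])
  have hcos : 0 < cos u := cos_pos_of_mem_Ioo ⟨by linarith, hu'⟩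
  have hcot : (1 + cot u ^ 2) ^ s = (sin u ^ (s - r) * sin u ^ (s + r))⁻¹ := by
    rw [← rpow_add hsin, show s - r + (s + r) = (2 : ℕ) * s by push_cast; ring,
      rpow_mul hsin.le, rpow_natCast, ← inv_rpow (by positivity)]
    congr 1
    rw [cot_eq_cos_div_sin]
    field_simp
    linarith [sin_sq_add_cos_sq u]
  calc 2 ^ s / (1 + cot u ^ 2) ^ s / (2 * u) ^ (s - r)
      = 2 ^ r * (sin u ^ (s - r) / u ^ (s - r)) * sin u ^ (s + r) := by
        rw [hcot, mul_rpow zero_le_two hu.le, show s = r + (s - r) by ring, rpow_add two_pos]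
        field_simp
        ring_nf
    _ ≤ 2 ^ r * 1 * sin u ^ (s + r) := by
        gcongr
        exact div_le_one_of_le₀ (rpow_le_rpow hsin.le (sin_le hu.le) (by linarith)) (by positivity)
    _ = 2 ^ r * cos u ^ (s + r) / cot u ^ (s + r) := by
        rw [cot_eq_cos_div_sin, div_rpow hcos.le hsin.le]
        field_simp

end Real

lemma sphericalVolume_farBall_inter_le (N : ℕ) (E : Set (EuclideanSpace ℝ (Fin N))) {t : ℝ}
    (ht : 0 ≤ t) :
    sphericalVolume N (farBall N t ∩ E) ≤
      ENNReal.ofReal (2 ^ (N : ℝ) / (1 + t ^ 2) ^ (N : ℝ)) * volume (farBall N t ∩ E) := by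
  rw [sphericalVolume, ← setLIntegral_const]
  refine setLIntegral_mono measurable_const fun x hx => ENNReal.ofReal_le_ofReal ?_
  have : t ≤ ‖x‖ := hx.1
  gcongr

lemma sphericalVolume_div_rpow_le (N : ℕ) (E : Set (EuclideanSpace ℝ (Fin N))) {r δ : ℝ}
    (hr : r ≤ N) (hδ : 0 < δ) (hδ' : δ < π) :
    sphericalVolume N (farBall N (cot (δ / 2)) ∩ E) / ENNReal.ofReal (δ ^ ((N : ℝ) - r)) ≤
      ENNReal.ofReal (2 ^ r * cos (δ / 2) ^ ((N : ℝ) + r)) *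
        (volume (farBall N (cot (δ / 2)) ∩ E) / ENNReal.ofReal (cot (δ / 2) ^ ((N : ℝ) + r))) := by
  have hcot : 0 < cot (δ / 2) := by
    rw [cot_eq_cos_div_sin]
    exact div_pos (cos_pos_of_mem_Ioo ⟨by linarith, by linarith⟩)
      (sin_pos_of_pos_of_lt_pi (by linarith) (by linarith))
  have htrig := two_rpow_div_one_add_cot_sq_rpow_div_le hr (u := δ / 2) (by linarith)
    (by linarith)
  rw [mul_div_cancel₀ δ two_ne_zero] at htrig
  set V := volume (farBall N (cot (δ / 2)) ∩ E)
  calc sphericalVolume N (farBall N (cot (δ / 2)) ∩ E) / ENNReal.ofReal (δ ^ ((N : ℝ) - r))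
      ≤ ENNReal.ofReal (2 ^ (N : ℝ) / (1 + cot (δ / 2) ^ 2) ^ (N : ℝ)) * V /
          ENNReal.ofReal (δ ^ ((N : ℝ) - r)) := by
        gcongr
        exact sphericalVolume_farBall_inter_le N E hcot.le
    _ = ENNReal.ofReal (2 ^ (N : ℝ) / (1 + cot (δ / 2) ^ 2) ^ (N : ℝ) / δ ^ ((N : ℝ) - r)) *
          V := by
        rw [ENNReal.mul_div_right_comm, ← ENNReal.ofReal_div_of_pos (by positivity)]
    _ ≤ ENNReal.ofReal (2 ^ r * cos (δ / 2) ^ ((N : ℝ) + r) / cot (δ / 2) ^ ((N : ℝ) + r)) *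
          V := by
        gcongr
    _ = _ := by
        rw [ENNReal.ofReal_div_of_pos (by positivity), ← ENNReal.mul_div_right_comm, mul_div_assoc]

theorem spherical_content_upper_bounds_general
    (N : ℕ) (Ω : Set (EuclideanSpace ℝ (Fin N))) (r : ℝ) (hr : r < -(N : ℝ)) :
    upperSphericalContent N Ω r ≤ ENNReal.ofReal ((2 : ℝ) ^ r) * upperContent N Ω r ∧
    lowerSphericalContent N Ω r ≤ ENNReal.ofReal ((2 : ℝ) ^ r) * lowerContent N Ω r := by
  set H : ℝ → ℝ≥0∞ := fun t => volume (farBall N t ∩ Ω) / ENNReal.ofReal (t ^ ((N : ℝ) + r))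
  set g : ℝ → ℝ≥0∞ := fun δ => ENNReal.ofReal (2 ^ r * cos (δ / 2) ^ ((N : ℝ) + r))
  have hg : Tendsto g (𝓝[>] 0) (𝓝 (ENNReal.ofReal (2 ^ r))) := by
    have : ContinuousAt (fun δ : ℝ => 2 ^ r * cos (δ / 2) ^ ((N : ℝ) + r)) 0 := by
      fun_prop (disch := simp)
    simpa [g, Function.comp_def] using (ENNReal.continuous_ofReal.tendsto _).comp
      (this.tendsto.mono_left nhdsWithin_le_nhds)
  have hbound : (fun δ : ℝ => sphericalVolume N (farBall N (cot (δ / 2)) ∩ Ω) /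
      ENNReal.ofReal (δ ^ ((N : ℝ) - r))) ≤ᶠ[𝓝[>] 0] g * (H ∘ fun δ => cot (δ / 2)) := by
    filter_upwards [Ioo_mem_nhdsGT pi_pos] with δ hδ
    exact sphericalVolume_div_rpow_le N Ω (by linarith) hδ.1 hδ.2
  have h2r : ENNReal.ofReal (2 ^ r) ≠ 0 := ENNReal.ofReal_pos.2 (by positivity) |>.ne'
  constructor
  · refine (ENNReal.limsup_le_mul_limsup_of_le_mul hg h2r ENNReal.ofReal_ne_top hbound).trans_eq ?_
    rw [limsup_comp, map_cot_half_nhdsGT_zero]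
    rfl
  · refine (ENNReal.liminf_le_mul_liminf_of_le_mul hg h2r ENNReal.ofReal_ne_top hbound).trans_eq ?_
    rw [liminf_comp, map_cot_half_nhdsGT_zero]
    rfl

theorem spherical_content_upper_bounds
    (N : ℕ) (Ω : Set (EuclideanSpace ℝ (Fin N))) (hΩ : MeasurableSet Ω)
    (hfin : volume Ω < ⊤) (r : ℝ) (hr : r < -(N : ℝ)) :
    upperSphericalContent N Ω r ≤ ENNReal.ofReal ((2 : ℝ) ^ r) * upperContent N Ω r ∧
    lowerSphericalContent N Ω r ≤ ENNReal.ofReal ((2 : ℝ) ^ r) * lowerContent N Ω r :=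
  spherical_content_upper_bounds_general N Ω r hr
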